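/- arXiv:2111.11781 — 2 statements merged into one kernel-verified Lean document; each statement's English description precedes it below -/
import Mathlib

section
/- Let n ≥ 2, h₀ > 0, and let U : ℝⁿ → ℝ be defined by U(y) = -n·log(1 + c_n^{-1/(n-1)} h₀^{1/(n-1)} |y|^{n/(n-1)}), where c_n = n·(n²/(n-1))^{n-1}. Then ∫_{ℝⁿ} h₀·e^{U(y)} dy = c_n·ω_n, where ω_n is the volume of the unit ball in ℝⁿ. -/
open MeasureTheory Metric

theorem stmt0 (n : ℕ) (hn : 2 ≤ n) (h₀ : ℝ) (hh : 0 < h₀)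
    (c : ℝ) (hc : c = n * ((n : ℝ)^2 / ((n : ℝ) - 1))^(n-1))
    (U : EuclideanSpace ℝ (Fin n) → ℝ)
    (hU : ∀ y, U y = -(n : ℝ) * Real.log
      (1 + c ^ (-(1 / ((n : ℝ) - 1))) * h₀ ^ (1 / ((n : ℝ) - 1)) *
        ‖y‖ ^ ((n : ℝ) / ((n : ℝ) - 1)))) :
    ∫ y : EuclideanSpace ℝ (Fin n), h₀ * Real.exp (U y) =
      c * (volume (ball (0 : EuclideanSpace ℝ (Fin n)) 1)).toReal := by
  haveI : NeZero n := ⟨by omega⟩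
  have hn1 : (1:ℝ) < (n:ℝ) := by exact_mod_cast Nat.lt_of_lt_of_le one_lt_two hn
  have hnpos : (0:ℝ) < n := by linarith
  have hne : (n:ℝ) ≠ 0 := hnpos.ne'
  have hn1pos : (0:ℝ) < (n:ℝ) - 1 := by linarith
  have hn1ne : (n:ℝ) - 1 ≠ 0 := hn1pos.ne'
  have hcpos : 0 < c := by
    rw [hc]
    positivity
  set a : ℝ := c ^ (-(1 / ((n : ℝ) - 1))) * h₀ ^ (1 / ((n : ℝ) - 1)) with ha_def
  have ha : 0 < a := by positivity
  set p : ℝ := (n : ℝ) / ((n : ℝ) - 1) with hp_def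
  have hp : 0 < p := by positivity
  have hpn : p * ((n:ℝ) - 1) = n := by
    rw [hp_def]; field_simp
  clear_value a p
  -- the radial profile
  set f : ℝ → ℝ := fun r => h₀ * (1 + a * r ^ p) ^ (-(n:ℝ)) with hf_def
  have tpos : ∀ r : ℝ, 0 ≤ r → 0 < 1 + a * r ^ p := by
    intro r hr
    have : 0 ≤ a * r ^ p := mul_nonneg ha.le (Real.rpow_nonneg hr _)
    linarith
  have hfy : ∀ y : EuclideanSpace ℝ (Fin n), h₀ * Real.exp (U y) = f ‖y‖ := by
    intro y
    have ht := tpos ‖y‖ (norm_nonneg y)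
    simp only [hU y, hf_def, Real.rpow_def_of_pos ht]
    ring_nf
  -- the antiderivative
  set F : ℝ → ℝ := fun r => (h₀ / n) * (r ^ (n:ℝ) * (1 + a * r ^ p) ^ (-((n:ℝ) - 1)))
    with hF_def
  set L : ℝ := (h₀ / n) * a ^ (-((n:ℝ) - 1)) with hL_def
  have hderiv : ∀ r ∈ Set.Ioi (0:ℝ), HasDerivAt F (r ^ (n - 1) • f r) r := by
    intro r hr
    have hr' : (0:ℝ) < r := hr
    have ht := tpos r hr'.le
    have h1 : HasDerivAt (fun s : ℝ => s ^ (n:ℝ)) ((n:ℝ) * r ^ ((n:ℝ) - 1)) r :=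
      Real.hasDerivAt_rpow_const (Or.inl hr'.ne')
    have h2 : HasDerivAt (fun s : ℝ => 1 + a * s ^ p) (a * (p * r ^ (p - 1))) r := by
      exact ((Real.hasDerivAt_rpow_const (Or.inl hr'.ne')).const_mul a).const_add 1
    have h3 : HasDerivAt (fun s : ℝ => (1 + a * s ^ p) ^ (-((n:ℝ) - 1)))
        ((a * (p * r ^ (p - 1))) * (-((n:ℝ) - 1)) * (1 + a * r ^ p) ^ (-((n:ℝ) - 1) - 1)) r :=
      h2.rpow_const (Or.inl ht.ne')
    have h4 := ((h1.mul h3).const_mul (h₀ / n))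
    convert h4 using 1
    · rfl
    · rfl
    · rfl
    -- algebraic identity for the derivative value
    have e3 : (1 + a * r ^ p) ^ (-((n:ℝ) - 1))
        = (1 + a * r ^ p) ^ (-(n:ℝ)) * (1 + a * r ^ p) := by
      rw [← Real.rpow_add_one ht.ne' (-(n:ℝ))]; congr 1; ring
    have e4 : (1 + a * r ^ p) ^ (-((n:ℝ) - 1) - 1) = (1 + a * r ^ p) ^ (-(n:ℝ)) := by
      congr 1; ring
    have e1 : r ^ (n:ℝ) = r ^ ((n:ℝ) - 1) * r := by
      rw [← Real.rpow_add_one hr'.ne' ((n:ℝ) - 1)]; congr 1; ring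
    have e5 : r ^ (n - 1 : ℕ) = r ^ ((n:ℝ) - 1) := by
      rw [← Real.rpow_natCast r (n - 1)]
      congr 1
      have h1n : (1:ℕ) ≤ n := by omega
      push_cast [Nat.cast_sub h1n]
      ring
    have hY : r ^ p = r ^ (p - 1) * r := by
      rw [← Real.rpow_add_one hr'.ne' (p - 1)]; congr 1; ring
    rw [smul_eq_mul]
    simp only [hf_def]
    rw [e5, e3, e4, e1]
    set X := r ^ ((n:ℝ) - 1) with hX
    set B := r ^ (p - 1) with hB
    set T := (1 + a * r ^ p) ^ (-(n:ℝ)) with hT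
    clear_value X B T
    rw [hY]
    have hnn : (n:ℝ) * ((n:ℝ))⁻¹ = 1 := mul_inv_cancel₀ hne
    linear_combination (h₀ * a * X * T * B * r / (n:ℝ)) * hpn - X * h₀ * T * hnn
  have hcont : ContinuousWithinAt F (Set.Ici (0:ℝ)) 0 := by
    apply ContinuousAt.continuousWithinAt
    have c1 : ContinuousAt (fun s : ℝ => s ^ (n:ℝ)) 0 :=
      Real.continuousAt_rpow_const 0 _ (Or.inr hnpos.le)
    have c2 : ContinuousAt (fun s : ℝ => s ^ p) 0 :=
      Real.continuousAt_rpow_const 0 _ (Or.inr hp.le)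
    have c3 : ContinuousAt (fun s : ℝ => 1 + a * s ^ p) 0 :=
      continuousAt_const.add (continuousAt_const.mul c2)
    have ht0 : (1:ℝ) + a * (0:ℝ) ^ p ≠ 0 := (tpos 0 le_rfl).ne'
    have c4 : ContinuousAt (fun s : ℝ => (1 + a * s ^ p) ^ (-((n:ℝ) - 1))) 0 :=
      c3.rpow_const (Or.inl ht0)
    exact continuousAt_const.mul (c1.mul c4)
  have hF0 : F 0 = 0 := by
    simp only [hF_def]
    rw [Real.zero_rpow hne]
    ring
  have htend : Filter.Tendsto F Filter.atTop (nhds L) := by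
    have hbase : Filter.Tendsto (fun r : ℝ => r ^ (-p)) Filter.atTop (nhds 0) :=
      tendsto_rpow_neg_atTop hp
    have hcontL : ContinuousAt (fun s : ℝ => (h₀ / n) * ((s + a)⁻¹) ^ ((n:ℝ) - 1)) 0 := by
      have c1 : ContinuousAt (fun s : ℝ => (s + a)⁻¹) 0 := by
        apply ContinuousAt.inv₀ (by fun_prop)
        simpa using ha.ne'
      exact continuousAt_const.mul (c1.rpow_const (Or.inr hn1pos.le))
    have hG : Filter.Tendsto (fun r : ℝ => (h₀ / n) * ((r ^ (-p) + a)⁻¹) ^ ((n:ℝ) - 1))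
        Filter.atTop (nhds ((h₀ / n) * (((0:ℝ) + a)⁻¹) ^ ((n:ℝ) - 1))) :=
      hcontL.tendsto.comp hbase
    have hLval : (h₀ / n) * (((0:ℝ) + a)⁻¹) ^ ((n:ℝ) - 1) = L := by
      rw [hL_def, zero_add, ← Real.rpow_neg_one a, ← Real.rpow_mul ha.le]
      congr 2
      ring
    rw [← hLval]
    apply hG.congr'
    filter_upwards [Filter.eventually_gt_atTop (0:ℝ)] with r hr
    have ht := tpos r hr.le
    have hrp : (0:ℝ) < r ^ p := Real.rpow_pos_of_pos hr p
    have key : (r ^ (-p) + a)⁻¹ = r ^ p * (1 + a * r ^ p)⁻¹ := by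
      rw [Real.rpow_neg hr.le]
      field_simp
    have hsplit : (r ^ p * (1 + a * r ^ p)⁻¹) ^ ((n:ℝ) - 1)
        = (r ^ p) ^ ((n:ℝ) - 1) * ((1 + a * r ^ p)⁻¹) ^ ((n:ℝ) - 1) :=
      Real.mul_rpow hrp.le (by positivity)
    have g1 : (r ^ p) ^ ((n:ℝ) - 1) = r ^ (n:ℝ) := by
      rw [← Real.rpow_mul hr.le, hpn]
    have g2 : ((1 + a * r ^ p)⁻¹) ^ ((n:ℝ) - 1) = (1 + a * r ^ p) ^ (-((n:ℝ) - 1)) := by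
      rw [← Real.rpow_neg_one (1 + a * r ^ p), ← Real.rpow_mul ht.le]
      congr 1; ring
    simp only [hF_def]
    rw [key, hsplit, g1, g2]
  have hnonneg : ∀ r ∈ Set.Ioi (0:ℝ), 0 ≤ r ^ (n - 1) • f r := by
    intro r hr
    have hr' : (0:ℝ) < r := hr
    have ht := tpos r hr'.le
    rw [smul_eq_mul]
    simp only [hf_def]
    positivity
  have hint : ∫ r in Set.Ioi (0:ℝ), r ^ (n - 1) • f r = L - F 0 :=
    integral_Ioi_of_hasDerivAt_of_nonneg hcont hderiv hnonneg htend
  have haval : a ^ (-((n:ℝ) - 1)) = c / h₀ := by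
    rw [ha_def, Real.mul_rpow (by positivity) (by positivity),
      ← Real.rpow_mul hcpos.le, ← Real.rpow_mul hh.le]
    rw [show -(1 / ((n:ℝ) - 1)) * -((n:ℝ) - 1) = 1 by field_simp,
      show 1 / ((n:ℝ) - 1) * -((n:ℝ) - 1) = -1 by field_simp]
    rw [Real.rpow_one, Real.rpow_neg_one]
    ring
  simp only [hfy]
  rw [MeasureTheory.integral_fun_norm_addHaar volume f]
  simp only [finrank_euclideanSpace_fin]
  rw [hint, hF0, sub_zero, hL_def, haval]
  simp only [nsmul_eq_mul, smul_eq_mul]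
  field_simp
  ring
  rfl
end

section
/- Let n ≥ 2 and let φ(r) = -n·log(1 + K·r^{n/(n-1)}) for r ≥ 0, with K > 0. Then φ is twice differentiable on (0,∞) and the radial n-Laplacian of the corresponding radial function, namely r^{1-n}·d/dr( r^{n-1}·|φ'(r)|^{n-2}·φ'(r) ), equals -h₀·e^{φ(r)} for all r > 0, where h₀ = c_n·K^{n-1} and c_n = n(n²/(n-1))^{n-1}. -/
theorem stmt16 (n : ℕ) (hn : 2 ≤ n) (K : ℝ) (hK : 0 < K)
    (c : ℝ) (hc : c = n * ((n : ℝ)^2 / ((n : ℝ) - 1))^(n-1))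
    (φ : ℝ → ℝ)
    (hφ : ∀ r, φ r = -(n : ℝ) * Real.log (1 + K * r ^ ((n : ℝ) / ((n : ℝ) - 1)))) :
    ∃ φ' : ℝ → ℝ, ∀ r > (0 : ℝ),
      HasDerivAt φ (φ' r) r ∧
      φ' r < 0 ∧
      DifferentiableAt ℝ φ' r ∧
      HasDerivAt (fun ρ => ρ ^ (n - 1) * (-(φ' ρ)) ^ (n - 1))
        (r ^ (n - 1) * c * K ^ (n - 1) *
          (1 + K * r ^ ((n : ℝ) / ((n : ℝ) - 1))) ^ (-(n : ℝ))) r := by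
  obtain ⟨m, rfl⟩ : ∃ m, n = m + 2 := ⟨n - 2, by omega⟩
  have hnR : ((m + 2 : ℕ) : ℝ) = (m : ℝ) + 2 := by push_cast; ring
  set p : ℝ := ((m + 2 : ℕ) : ℝ) / (((m + 2 : ℕ) : ℝ) - 1) with hpdef
  clear_value p
  have hm0 : (0:ℝ) ≤ (m:ℝ) := Nat.cast_nonneg m
  have hd1 : (0:ℝ) < ((m + 2 : ℕ) : ℝ) - 1 := by rw [hnR]; linarith
  have hppos : 0 < p := hpdef ▸ div_pos (by rw [hnR]; linarith) hd1
  have hpn : p * (((m + 2 : ℕ) : ℝ) - 1) = ((m + 2 : ℕ) : ℝ) :=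
    hpdef ▸ div_mul_cancel₀ _ hd1.ne'
  have hpn' : ((m:ℝ) + 1) * p = (m:ℝ) + 2 := by
    rw [hnR] at hpn; nlinarith [hpn]
  refine ⟨fun x => -(((m + 2 : ℕ) : ℝ) * (K * (p * x ^ (p - 1)) / (1 + K * x ^ p))), ?_⟩
  intro r hr
  have hrp : 0 < r ^ p := Real.rpow_pos_of_pos hr p
  have hrp1 : 0 < r ^ (p - 1) := Real.rpow_pos_of_pos hr (p - 1)
  have hden : 0 < 1 + K * r ^ p := by nlinarith
  have hu : HasDerivAt (fun x : ℝ => 1 + K * x ^ p) (K * (p * r ^ (p - 1))) r := by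
    simpa using ((Real.hasDerivAt_rpow_const (Or.inl hr.ne')).const_mul K).const_add 1
  have hφd : HasDerivAt φ
      (-(((m + 2 : ℕ) : ℝ) * (K * (p * r ^ (p - 1)) / (1 + K * r ^ p)))) r := by
    have h1 : HasDerivAt (fun x : ℝ => Real.log (1 + K * x ^ p))
        (K * (p * r ^ (p - 1)) / (1 + K * r ^ p)) r := hu.log hden.ne'
    have h2 := h1.const_mul (-((m + 2 : ℕ) : ℝ))
    have hfe : φ = fun x => -((m + 2 : ℕ) : ℝ) * Real.log (1 + K * x ^ p) := funext hφ
    rw [hfe]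
    exact h2.congr_deriv (by ring)
  have hsplit : r ^ p = r * r ^ (p - 1) := by
    have h := Real.rpow_add hr 1 (p - 1)
    rw [Real.rpow_one] at h
    rw [show (1:ℝ) + (p - 1) = p by ring] at h
    exact h
  have hkey : ∀ ρ : ℝ, 0 < ρ → (ρ ^ (p - 1)) ^ (m + 1) = ρ := by
    intro ρ hρ
    rw [← Real.rpow_natCast (ρ ^ (p - 1)) (m + 1), ← Real.rpow_mul hρ.le]
    rw [show (p - 1) * ((m + 1 : ℕ) : ℝ) = 1 by push_cast; nlinarith [hpn'], Real.rpow_one]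
  have hpos : 0 < ((m + 2 : ℕ) : ℝ) * (K * (p * r ^ (p - 1)) / (1 + K * r ^ p)) := by
    apply mul_pos (by rw [hnR]; linarith)
    exact div_pos (mul_pos hK (mul_pos hppos hrp1)) hden
  refine ⟨hφd, by simpa using hpos, ?_, ?_⟩
  · have d1 : DifferentiableAt ℝ (fun x : ℝ => K * (p * x ^ (p - 1))) r :=
      (((Real.hasDerivAt_rpow_const (p := p - 1) (Or.inl hr.ne')).differentiableAt.const_mul
        p).const_mul K)
    have d2 : DifferentiableAt ℝ (fun x : ℝ => 1 + K * x ^ p) r := hu.differentiableAt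
    exact ((d1.div d2 hden.ne').const_mul _).neg
  · set A : ℝ := (((m + 2 : ℕ) : ℝ) * K * p) ^ (m + 1) with hAdef
    clear_value A
    have hnum : HasDerivAt (fun ρ : ℝ => A * ρ ^ (m + 2))
        (A * (((m + 2 : ℕ) : ℝ) * r ^ (m + 1))) r := by
      simpa using (hasDerivAt_pow (m + 2) r).const_mul A
    have hv : HasDerivAt (fun ρ : ℝ => (1 + K * ρ ^ p) ^ (m + 1))
        (((m + 1 : ℕ) : ℝ) * (1 + K * r ^ p) ^ m * (K * (p * r ^ (p - 1)))) r := by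
      simpa using hu.fun_pow (m + 1)
    have hq := hnum.div hv (pow_ne_zero _ hden.ne')
    have heq : (fun ρ => ρ ^ (m + 2 - 1) *
        (-(-(((m + 2 : ℕ) : ℝ) * (K * (p * ρ ^ (p - 1)) / (1 + K * ρ ^ p))))) ^ (m + 2 - 1))
        =ᶠ[nhds r] (fun ρ : ℝ => A * ρ ^ (m + 2) / (1 + K * ρ ^ p) ^ (m + 1)) := by
      filter_upwards [Ioi_mem_nhds hr] with ρ hρ
      have hρ : (0:ℝ) < ρ := hρ
      have hDρ : (0:ℝ) < 1 + K * ρ ^ p := by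
        nlinarith [Real.rpow_pos_of_pos hρ p]
      simp only [neg_neg]
      have e1 : ((m + 2 : ℕ) : ℝ) * (K * (p * ρ ^ (p - 1)) / (1 + K * ρ ^ p))
          = ((m + 2 : ℕ) : ℝ) * K * p * ρ ^ (p - 1) / (1 + K * ρ ^ p) := by ring
      rw [show m + 2 - 1 = m + 1 from rfl, e1, div_pow, mul_pow, hkey ρ hρ, hAdef]
      field_simp
      ring
    have hmain := hq.congr_of_eventuallyEq heq
    refine hmain.congr_deriv (Eq.symm ?_)
    have hcA : c * K ^ (m + 1) = ((m + 2 : ℕ) : ℝ) * A := by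
      rw [hc, hAdef, show m + 2 - 1 = m + 1 from rfl, mul_assoc, ← mul_pow]
      congr 2
      rw [hpdef]
      field_simp
    have hbr : A * (((m + 2 : ℕ) : ℝ) * r ^ (m + 1)) * (1 + K * r ^ p)
        - A * r ^ (m + 2) * (((m + 1 : ℕ) : ℝ) * (K * (p * r ^ (p - 1))))
        = A * ((m + 2 : ℕ) : ℝ) * r ^ (m + 1) := by
      rw [hsplit]
      push_cast
      linear_combination (-(A * K * r ^ (m + 2) * r ^ (p - 1))) * hpn'
    rw [show m + 2 - 1 = m + 1 from rfl, Real.rpow_neg hden.le, Real.rpow_natCast]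
    rw [eq_div_iff (by positivity)]
    have expand : A * (((m + 2 : ℕ) : ℝ) * r ^ (m + 1)) * (1 + K * r ^ p) ^ (m + 1)
        - A * r ^ (m + 2) * (((m + 1 : ℕ) : ℝ) * (1 + K * r ^ p) ^ m * (K * (p * r ^ (p - 1))))
        = (1 + K * r ^ p) ^ m * (A * ((m + 2 : ℕ) : ℝ) * r ^ (m + 1)) := by
      calc A * (((m + 2 : ℕ) : ℝ) * r ^ (m + 1)) * (1 + K * r ^ p) ^ (m + 1)
          - A * r ^ (m + 2) * (((m + 1 : ℕ) : ℝ) * (1 + K * r ^ p) ^ m * (K * (p * r ^ (p - 1))))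
          = (1 + K * r ^ p) ^ m * (A * (((m + 2 : ℕ) : ℝ) * r ^ (m + 1)) * (1 + K * r ^ p)
            - A * r ^ (m + 2) * (((m + 1 : ℕ) : ℝ) * (K * (p * r ^ (p - 1))))) := by ring
        _ = (1 + K * r ^ p) ^ m * (A * ((m + 2 : ℕ) : ℝ) * r ^ (m + 1)) := by rw [hbr]
    rw [expand]
    have hDne : (1 + K * r ^ p) ≠ 0 := hden.ne'
    field_simp
    push_cast at hcA ⊢
    linear_combination ((1 + K * r ^ p) ^ (m + 1) * (1 + K * r ^ p) ^ (m + 1)) * hcA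
end
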